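/- Let α ∈ ℝ, let f(z; α) = ((1 − α z)² + 1)² φ(z) / ((2 + α²)(2 + 3α²)), and let μ(α) = −4α/(2 + α²) be its mean. Then the kurtosis satisfies ∫_ℝ (z − μ(α))⁴ f(z; α) dz / (∫_ℝ (z − μ(α))² f(z; α) dz)² = 3(2 + 3α²)(32 + 112α² + 144α⁴ + 216α⁶ + 410α⁸ + 35α¹⁰) / (8 + 20α² + 6α⁴ + 15α⁶)². -/

import Mathlib

open MeasureTheory

/-- The standard normal probability density function. -/
noncomputable def phi (z : ℝ) : ℝ := (Real.sqrt (2 * Real.pi))⁻¹ * Real.exp (-z ^ 2 / 2)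



lemma pow_le_factorial_mul_exp {x : ℝ} (hx : 0 ≤ x) (n : ℕ) :
    x ^ n ≤ n.factorial * Real.exp x := by
  have h1 : x ^ n / n.factorial ≤ Real.exp x := by
    calc x ^ n / n.factorial ≤ ∑ i ∈ Finset.range (n+1), x ^ i / i.factorial := by
          exact Finset.single_le_sum (f := fun i => x ^ i / (i.factorial : ℝ))
            (fun i _ => by positivity) (Finset.self_mem_range_succ n)
      _ ≤ Real.exp x := Real.sum_le_exp_of_nonneg hx (n+1)
  have h2 : (0:ℝ) < n.factorial := by positivity
  calc x ^ n = n.factorial * (x ^ n / n.factorial) := by field_simp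
    _ ≤ n.factorial * Real.exp x := by
        exact mul_le_mul_of_nonneg_left h1 h2.le

lemma integ_pow_gauss (n : ℕ) :
    Integrable (fun z : ℝ => z ^ n * Real.exp (-z ^ 2 / 2)) := by
  have h14 : (0:ℝ) < 1/4 := by norm_num
  apply Integrable.mono' (((integrable_exp_neg_mul_sq h14).const_mul
    ((n.factorial : ℝ) * Real.exp 1)))
  · exact (Continuous.mul (continuous_pow n)
      (Real.continuous_exp.comp (by continuity))).aestronglyMeasurable
  · filter_upwards with z
    have h1 : |z| ^ n ≤ n.factorial * Real.exp |z| :=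
      pow_le_factorial_mul_exp (abs_nonneg z) n
    have h2 : Real.exp |z| * Real.exp (-z ^ 2 / 2) ≤ Real.exp 1 * Real.exp (-(1/4) * z ^ 2) := by
      rw [← Real.exp_add, ← Real.exp_add]
      apply Real.exp_le_exp.2
      nlinarith [sq_nonneg (|z| - 2), sq_abs z]
    have h3 : ‖z ^ n * Real.exp (-z ^ 2 / 2)‖ = |z| ^ n * Real.exp (-z ^ 2 / 2) := by
      rw [norm_mul, norm_pow, Real.norm_eq_abs, Real.norm_eq_abs,
        abs_of_pos (Real.exp_pos _)]
    rw [h3]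
    calc |z| ^ n * Real.exp (-z ^ 2 / 2)
        ≤ (n.factorial * Real.exp |z|) * Real.exp (-z ^ 2 / 2) := by
          exact mul_le_mul_of_nonneg_right h1 (Real.exp_pos _).le
      _ = n.factorial * (Real.exp |z| * Real.exp (-z ^ 2 / 2)) := by ring
      _ ≤ n.factorial * (Real.exp 1 * Real.exp (-(1/4) * z ^ 2)) := by
          exact mul_le_mul_of_nonneg_left h2 (by positivity)
      _ = (n.factorial : ℝ) * Real.exp 1 * Real.exp (-(1/4) * z ^ 2) := by ring


lemma gauss_rec (n : ℕ) :
    ∫ z : ℝ, z ^ (n + 2) * Real.exp (-z ^ 2 / 2)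
      = (n + 1 : ℝ) * ∫ z : ℝ, z ^ n * Real.exp (-z ^ 2 / 2) := by
  have hd : ∀ z : ℝ, HasDerivAt (fun z : ℝ => z ^ (n + 1) * Real.exp (-z ^ 2 / 2))
      ((n + 1 : ℝ) * (z ^ n * Real.exp (-z ^ 2 / 2)) - z ^ (n + 2) * Real.exp (-z ^ 2 / 2)) z := by
    intro z
    have h1 : HasDerivAt (fun z : ℝ => z ^ (n + 1)) ((n + 1 : ℝ) * z ^ n) z := by
      simpa using hasDerivAt_pow (n + 1) z
    have h3 : HasDerivAt (fun z : ℝ => -z ^ 2 / 2) (-z) z := by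
      have h := ((hasDerivAt_pow 2 z).neg).div_const 2
      exact h.congr_deriv (by norm_num; ring)
    have h2 : HasDerivAt (fun z : ℝ => Real.exp (-z ^ 2 / 2))
        (Real.exp (-z ^ 2 / 2) * (-z)) z := h3.exp
    have h4 := h1.mul h2
    exact h4.congr_deriv (by rw [pow_succ z (n + 1), pow_succ z n]; ring)
  have hint : Integrable (fun z : ℝ =>
      (n + 1 : ℝ) * (z ^ n * Real.exp (-z ^ 2 / 2)) - z ^ (n + 2) * Real.exp (-z ^ 2 / 2)) :=
    ((integ_pow_gauss n).const_mul _).sub (integ_pow_gauss (n + 2))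
  have h0 := integral_eq_zero_of_hasDerivAt_of_integrable hd hint (integ_pow_gauss (n + 1))
  rw [integral_sub ((integ_pow_gauss n).const_mul _) (integ_pow_gauss (n + 2)),
    integral_const_mul] at h0
  linarith

lemma gauss_M0 : ∫ z : ℝ, Real.exp (-z ^ 2 / 2) = Real.sqrt (2 * Real.pi) := by
  have h : ∀ z : ℝ, -z ^ 2 / 2 = -(1/2) * z ^ 2 := fun z => by ring
  simp_rw [h, integral_gaussian]
  congr 1
  ring

lemma gauss_M1 : ∫ z : ℝ, z * Real.exp (-z ^ 2 / 2) = 0 := by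
  have h := integral_neg_eq_self (fun z : ℝ => z * Real.exp (-z ^ 2 / 2)) (volume : Measure ℝ)
  simp only [neg_sq, neg_mul] at h
  rw [integral_neg] at h
  linarith

lemma gauss_M2 : ∫ z : ℝ, z ^ 2 * Real.exp (-z ^ 2 / 2) = Real.sqrt (2 * Real.pi) := by
  have h := gauss_rec 0
  norm_num [pow_zero, one_mul] at h
  rw [h, gauss_M0]

lemma gauss_M3 : ∫ z : ℝ, z ^ 3 * Real.exp (-z ^ 2 / 2) = 0 := by
  have h := gauss_rec 1
  norm_num [pow_one] at h
  rw [h, gauss_M1, mul_zero]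

lemma gauss_M4 : ∫ z : ℝ, z ^ 4 * Real.exp (-z ^ 2 / 2) = 3 * Real.sqrt (2 * Real.pi) := by
  have h := gauss_rec 2
  norm_num at h
  rw [h, gauss_M2]

lemma gauss_M5 : ∫ z : ℝ, z ^ 5 * Real.exp (-z ^ 2 / 2) = 0 := by
  have h := gauss_rec 3
  norm_num at h
  rw [h, gauss_M3, mul_zero]

lemma gauss_M6 : ∫ z : ℝ, z ^ 6 * Real.exp (-z ^ 2 / 2) = 15 * Real.sqrt (2 * Real.pi) := by
  have h := gauss_rec 4
  norm_num at h
  rw [h, gauss_M4]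
  ring

lemma gauss_M7 : ∫ z : ℝ, z ^ 7 * Real.exp (-z ^ 2 / 2) = 0 := by
  have h := gauss_rec 5
  norm_num at h
  rw [h, gauss_M5, mul_zero]

lemma gauss_M8 : ∫ z : ℝ, z ^ 8 * Real.exp (-z ^ 2 / 2) = 105 * Real.sqrt (2 * Real.pi) := by
  have h := gauss_rec 6
  norm_num at h
  rw [h, gauss_M6]
  ring

lemma gauss_poly (a0 a1 a2 a3 a4 a5 a6 a7 a8 : ℝ) :
    ∫ z : ℝ, (a0 + a1 * z + a2 * z ^ 2 + a3 * z ^ 3 + a4 * z ^ 4 + a5 * z ^ 5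
        + a6 * z ^ 6 + a7 * z ^ 7 + a8 * z ^ 8) * Real.exp (-z ^ 2 / 2)
      = (a0 + a2 + 3 * a4 + 15 * a6 + 105 * a8) * Real.sqrt (2 * Real.pi) := by
  have J0 : Integrable (fun z : ℝ => a0 * Real.exp (-z ^ 2 / 2)) := by
    simpa using (integ_pow_gauss 0).const_mul a0
  have J1 : Integrable (fun z : ℝ => a1 * (z * Real.exp (-z ^ 2 / 2))) := by
    simpa using (integ_pow_gauss 1).const_mul a1
  have J : ∀ (c : ℝ) (i : ℕ), Integrable (fun z : ℝ => c * (z ^ i * Real.exp (-z ^ 2 / 2))) :=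
    fun c i => (integ_pow_gauss i).const_mul c
  have e : (fun z : ℝ => (a0 + a1 * z + a2 * z ^ 2 + a3 * z ^ 3 + a4 * z ^ 4 + a5 * z ^ 5
        + a6 * z ^ 6 + a7 * z ^ 7 + a8 * z ^ 8) * Real.exp (-z ^ 2 / 2))
      = fun z : ℝ => a0 * Real.exp (-z ^ 2 / 2) + (a1 * (z * Real.exp (-z ^ 2 / 2))
        + (a2 * (z ^ 2 * Real.exp (-z ^ 2 / 2)) + (a3 * (z ^ 3 * Real.exp (-z ^ 2 / 2))
        + (a4 * (z ^ 4 * Real.exp (-z ^ 2 / 2)) + (a5 * (z ^ 5 * Real.exp (-z ^ 2 / 2))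
        + (a6 * (z ^ 6 * Real.exp (-z ^ 2 / 2)) + (a7 * (z ^ 7 * Real.exp (-z ^ 2 / 2))
        + a8 * (z ^ 8 * Real.exp (-z ^ 2 / 2))))))))) := by
    funext z; ring
  rw [e]
  have T8 : Integrable (fun z : ℝ => a8 * (z ^ 8 * Real.exp (-z ^ 2 / 2))) := J a8 8
  have T7 : Integrable (fun z : ℝ => a7 * (z ^ 7 * Real.exp (-z ^ 2 / 2)) + (a8 * (z ^ 8 * Real.exp (-z ^ 2 / 2)))) := (J a7 7).add T8
  have T6 : Integrable (fun z : ℝ => a6 * (z ^ 6 * Real.exp (-z ^ 2 / 2)) + (a7 * (z ^ 7 * Real.exp (-z ^ 2 / 2)) + (a8 * (z ^ 8 * Real.exp (-z ^ 2 / 2))))) := (J a6 6).add T7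
  have T5 : Integrable (fun z : ℝ => a5 * (z ^ 5 * Real.exp (-z ^ 2 / 2)) + (a6 * (z ^ 6 * Real.exp (-z ^ 2 / 2)) + (a7 * (z ^ 7 * Real.exp (-z ^ 2 / 2)) + (a8 * (z ^ 8 * Real.exp (-z ^ 2 / 2)))))) := (J a5 5).add T6
  have T4 : Integrable (fun z : ℝ => a4 * (z ^ 4 * Real.exp (-z ^ 2 / 2)) + (a5 * (z ^ 5 * Real.exp (-z ^ 2 / 2)) + (a6 * (z ^ 6 * Real.exp (-z ^ 2 / 2)) + (a7 * (z ^ 7 * Real.exp (-z ^ 2 / 2)) + (a8 * (z ^ 8 * Real.exp (-z ^ 2 / 2))))))) := (J a4 4).add T5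
  have T3 : Integrable (fun z : ℝ => a3 * (z ^ 3 * Real.exp (-z ^ 2 / 2)) + (a4 * (z ^ 4 * Real.exp (-z ^ 2 / 2)) + (a5 * (z ^ 5 * Real.exp (-z ^ 2 / 2)) + (a6 * (z ^ 6 * Real.exp (-z ^ 2 / 2)) + (a7 * (z ^ 7 * Real.exp (-z ^ 2 / 2)) + (a8 * (z ^ 8 * Real.exp (-z ^ 2 / 2)))))))) := (J a3 3).add T4
  have T2 : Integrable (fun z : ℝ => a2 * (z ^ 2 * Real.exp (-z ^ 2 / 2)) + (a3 * (z ^ 3 * Real.exp (-z ^ 2 / 2)) + (a4 * (z ^ 4 * Real.exp (-z ^ 2 / 2)) + (a5 * (z ^ 5 * Real.exp (-z ^ 2 / 2)) + (a6 * (z ^ 6 * Real.exp (-z ^ 2 / 2)) + (a7 * (z ^ 7 * Real.exp (-z ^ 2 / 2)) + (a8 * (z ^ 8 * Real.exp (-z ^ 2 / 2))))))))) := (J a2 2).add T3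
  have T1 : Integrable (fun z : ℝ => a1 * (z * Real.exp (-z ^ 2 / 2)) + (a2 * (z ^ 2 * Real.exp (-z ^ 2 / 2)) + (a3 * (z ^ 3 * Real.exp (-z ^ 2 / 2)) + (a4 * (z ^ 4 * Real.exp (-z ^ 2 / 2)) + (a5 * (z ^ 5 * Real.exp (-z ^ 2 / 2)) + (a6 * (z ^ 6 * Real.exp (-z ^ 2 / 2)) + (a7 * (z ^ 7 * Real.exp (-z ^ 2 / 2)) + (a8 * (z ^ 8 * Real.exp (-z ^ 2 / 2)))))))))) := (J1).add T2
  rw [integral_add J0 T1]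
  rw [integral_add (J1) T2]
  rw [integral_add (J a2 2) T3]
  rw [integral_add (J a3 3) T4]
  rw [integral_add (J a4 4) T5]
  rw [integral_add (J a5 5) T6]
  rw [integral_add (J a6 6) T7]
  rw [integral_add (J a7 7) T8]
  simp only [integral_const_mul]
  rw [gauss_M0, gauss_M1, gauss_M2, gauss_M3, gauss_M4, gauss_M5, gauss_M6, gauss_M7, gauss_M8]
  ring

set_option maxHeartbeats 2000000 in
theorem basn2_kurtosis (α : ℝ) :
    (∫ z : ℝ, (z - (-4 * α / (2 + α ^ 2))) ^ 4 *
        (((1 - α * z) ^ 2 + 1) ^ 2 * phi z / ((2 + α ^ 2) * (2 + 3 * α ^ 2)))) /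
      (∫ z : ℝ, (z - (-4 * α / (2 + α ^ 2))) ^ 2 *
        (((1 - α * z) ^ 2 + 1) ^ 2 * phi z / ((2 + α ^ 2) * (2 + 3 * α ^ 2)))) ^ 2 =
      3 * (2 + 3 * α ^ 2) *
        (32 + 112 * α ^ 2 + 144 * α ^ 4 + 216 * α ^ 6 + 410 * α ^ 8 + 35 * α ^ 10) /
        (8 + 20 * α ^ 2 + 6 * α ^ 4 + 15 * α ^ 6) ^ 2 := by
  have hs : (2 + α ^ 2) ≠ 0 := by positivity
  have ht : (2 + 3 * α ^ 2) ≠ 0 := by positivity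
  have hq : Real.sqrt (2 * Real.pi) ≠ 0 :=
    ne_of_gt (Real.sqrt_pos.mpr (by positivity))
  have e4 : (fun z : ℝ => (z - (-4 * α / (2 + α ^ 2))) ^ 4 *
        (((1 - α * z) ^ 2 + 1) ^ 2 * phi z / ((2 + α ^ 2) * (2 + 3 * α ^ 2))))
      = fun z : ℝ => (((1024 * α ^ 4) / ((2 + α ^ 2) ^ 5 * (2 + 3 * α ^ 2) * Real.sqrt (2 * Real.pi))) + ((2048 * α ^ 3 - 1024 * α ^ 5) / ((2 + α ^ 2) ^ 5 * (2 + 3 * α ^ 2) * Real.sqrt (2 * Real.pi))) * z + ((1536 * α ^ 2 - 2560 * α ^ 4 + 384 * α ^ 6) / ((2 + α ^ 2) ^ 5 * (2 + 3 * α ^ 2) * Real.sqrt (2 * Real.pi))) * z ^ 2 + ((512 * α - 2304 * α ^ 3 + 1408 * α ^ 5 + 320 * α ^ 7) / ((2 + α ^ 2) ^ 5 * (2 + 3 * α ^ 2) * Real.sqrt (2 * Real.pi))) * z ^ 3 + ((64 - 896 * α ^ 2 + 1632 * α ^ 4 + 288 * α ^ 6 - 124 * α ^ 8) / ((2 + α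 ^ 2) ^ 5 * (2 + 3 * α ^ 2) * Real.sqrt (2 * Real.pi))) * z ^ 4 + ((-128 * α + 768 * α ^ 3 - 192 * α ^ 5 - 320 * α ^ 7 - 8 * α ^ 9) / ((2 + α ^ 2) ^ 5 * (2 + 3 * α ^ 2) * Real.sqrt (2 * Real.pi))) * z ^ 5 + ((128 * α ^ 2 - 256 * α ^ 4 - 192 * α ^ 6 + 64 * α ^ 8 + 40 * α ^ 10) / ((2 + α ^ 2) ^ 5 * (2 + 3 * α ^ 2) * Real.sqrt (2 * Real.pi))) * z ^ 6 + ((-64 * α ^ 3 + 96 * α ^ 7 + 64 * α ^ 9 + 12 * α ^ 11) / ((2 + α ^ 2) ^ 5 * (2 + 3 * α ^ 2) * Real.sqrt (2 * Real.pi))) * z ^ 7 + ((16 * α ^ 4 + 32 * α ^ 6 + 24 * α ^ 8 + 8 * α ^ 10 + α ^ 12) / ((2 + α ^ 2) ^ 5 * (2 + 3 * α ^ 2) * Real.sqrt (2 * Real.pi))) * z ^ 8) * Real.exp (-z ^ 2 / 2) := by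
    funext z
    simp only [phi]
    field_simp
    ring
  have e2 : (fun z : ℝ => (z - (-4 * α / (2 + α ^ 2))) ^ 2 *
        (((1 - α * z) ^ 2 + 1) ^ 2 * phi z / ((2 + α ^ 2) * (2 + 3 * α ^ 2))))
      = fun z : ℝ => (((64 * α ^ 2) / ((2 + α ^ 2) ^ 3 * (2 + 3 * α ^ 2) * Real.sqrt (2 * Real.pi))) + ((64 * α - 96 * α ^ 3) / ((2 + α ^ 2) ^ 3 * (2 + 3 * α ^ 2) * Real.sqrt (2 * Real.pi))) * z + ((16 - 112 * α ^ 2 + 68 * α ^ 4) / ((2 + α ^ 2) ^ 3 * (2 + 3 * α ^ 2) * Real.sqrt (2 * Real.pi))) * z ^ 2 + ((-32 * α + 96 * α ^ 3 - 8 * α ^ 5) / ((2 + α ^ 2) ^ 3 * (2 + 3 * α ^ 2) * Real.sqrt (2 * Real.pi))) * z ^ 3 + ((32 * α ^ 2 - 32 * α ^ 4 - 8 * α ^ 6) / ((2 + α ^ 2) ^ 3 * (2 + 3 * α ^ 2) * Real.sqrt (2 * Real.pi))) * z ^ 4 + ((-16 * α ^ 3 + 4 * α ^ 7) / ((2 +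 α ^ 2) ^ 3 * (2 + 3 * α ^ 2) * Real.sqrt (2 * Real.pi))) * z ^ 5 + ((4 * α ^ 4 + 4 * α ^ 6 + α ^ 8) / ((2 + α ^ 2) ^ 3 * (2 + 3 * α ^ 2) * Real.sqrt (2 * Real.pi))) * z ^ 6 + ((0 : ℝ) / ((2 + α ^ 2) ^ 3 * (2 + 3 * α ^ 2) * Real.sqrt (2 * Real.pi))) * z ^ 7 + ((0 : ℝ) / ((2 + α ^ 2) ^ 3 * (2 + 3 * α ^ 2) * Real.sqrt (2 * Real.pi))) * z ^ 8) * Real.exp (-z ^ 2 / 2) := by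
    funext z
    simp only [phi]
    field_simp
    ring
  rw [e4, e2, gauss_poly, gauss_poly]
  have hN2 : (16 + 48 * α ^ 2 + 32 * α ^ 4 + 36 * α ^ 6 + 15 * α ^ 8 : ℝ) ≠ 0 := by positivity
  have hD : (8 + 20 * α ^ 2 + 6 * α ^ 4 + 15 * α ^ 6 : ℝ) ≠ 0 := by positivity
  have h4 : ((1024 * α ^ 4) / ((2 + α ^ 2) ^ 5 * (2 + 3 * α ^ 2) * Real.sqrt (2 * Real.pi)) + (1536 * α ^ 2 - 2560 * α ^ 4 + 384 * α ^ 6) / ((2 + α ^ 2) ^ 5 * (2 + 3 * α ^ 2) * Real.sqrt (2 * Real.pi))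
      + 3 * ((64 - 896 * α ^ 2 + 1632 * α ^ 4 + 288 * α ^ 6 - 124 * α ^ 8) / ((2 + α ^ 2) ^ 5 * (2 + 3 * α ^ 2) * Real.sqrt (2 * Real.pi)))
      + 15 * ((128 * α ^ 2 - 256 * α ^ 4 - 192 * α ^ 6 + 64 * α ^ 8 + 40 * α ^ 10) / ((2 + α ^ 2) ^ 5 * (2 + 3 * α ^ 2) * Real.sqrt (2 * Real.pi)))
      + 105 * ((16 * α ^ 4 + 32 * α ^ 6 + 24 * α ^ 8 + 8 * α ^ 10 + α ^ 12) / ((2 + α ^ 2) ^ 5 * (2 + 3 * α ^ 2) * Real.sqrt (2 * Real.pi))))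
        * Real.sqrt (2 * Real.pi)
      = (192 + 768 * α ^ 2 + 1200 * α ^ 4 + 1728 * α ^ 6 + 3108 * α ^ 8 + 1440 * α ^ 10
          + 105 * α ^ 12) / ((2 + α ^ 2) ^ 5 * (2 + 3 * α ^ 2)) := by
    field_simp
    ring
  have h2 : ((64 * α ^ 2) / ((2 + α ^ 2) ^ 3 * (2 + 3 * α ^ 2) * Real.sqrt (2 * Real.pi)) + (16 - 112 * α ^ 2 + 68 * α ^ 4) / ((2 + α ^ 2) ^ 3 * (2 + 3 * α ^ 2) * Real.sqrt (2 * Real.pi))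
      + 3 * ((32 * α ^ 2 - 32 * α ^ 4 - 8 * α ^ 6) / ((2 + α ^ 2) ^ 3 * (2 + 3 * α ^ 2) * Real.sqrt (2 * Real.pi)))
      + 15 * ((4 * α ^ 4 + 4 * α ^ 6 + α ^ 8) / ((2 + α ^ 2) ^ 3 * (2 + 3 * α ^ 2) * Real.sqrt (2 * Real.pi)))
      + 105 * ((0 : ℝ) / ((2 + α ^ 2) ^ 3 * (2 + 3 * α ^ 2) * Real.sqrt (2 * Real.pi))))
        * Real.sqrt (2 * Real.pi)
      = (16 + 48 * α ^ 2 + 32 * α ^ 4 + 36 * α ^ 6 + 15 * α ^ 8) /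
          ((2 + α ^ 2) ^ 3 * (2 + 3 * α ^ 2)) := by
    field_simp
    ring
  rw [h4, h2, div_pow]
  rw [div_div_div_eq]
  rw [div_eq_div_iff (by positivity) (by positivity)]
  ring
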